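/- arXiv:1111.1508 — 3 statements merged into one kernel-verified Lean document; each statement's English description precedes it below -/
import Mathlib

section
/- Let V be a finite-dimensional complex inner product space and T : V → V a self-adjoint (with respect to the inner product) linear endomorphism with eigenvalue λ. Write the characteristic polynomial of T as P(X) = (X−λ)^μ · Q(X) with Q(λ) ≠ 0. Then the operator Q(T)/Q(λ) is the orthogonal projection of V onto the eigenspace ker(T−λ). -/
/-!
Split `v = a + b` with `a` the projection of `v` onto `E = ker (T - λ)` and `b ∈ Eᗮ`. On `E`,
`Q(T)` acts as the scalar `Q(λ)`. By Cayley–Hamilton `(T - λ)^μ Q(T) = 0`, so `Q(T) b` is a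
generalized eigenvector, hence (self-adjoint operators being semisimple) an eigenvector; but
`Eᗮ` is `T`-invariant, so `Q(T) b ∈ E ∩ Eᗮ = 0`.
-/

open Polynomial Module.End

namespace LinearMap.IsSymmetric

variable {𝕜 E : Type*} [RCLike 𝕜] [NormedAddCommGroup E] [InnerProductSpace 𝕜 E]
  {T : E →ₗ[𝕜] E}

theorem aeval_apply_mem_orthogonal_eigenspace (hT : T.IsSymmetric) {lam : 𝕜} (q : 𝕜[X])
    {x : E} (hx : x ∈ (eigenspace T lam)ᗮ) : aeval T q x ∈ (eigenspace T lam)ᗮ :=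
  aeval_apply_smul_mem_of_le_comap hx q T
    (hT.invariant_orthogonalComplement_eigenspace lam)

theorem aeval_apply_mem_eigenspace_of_aeval_X_sub_C_pow_mul_eq_zero (hT : T.IsSymmetric)
    {lam : 𝕜} {μ : ℕ} {q : 𝕜[X]} (hq : aeval T ((X - C lam) ^ μ * q) = 0) (x : E) :
    aeval T q x ∈ eigenspace T lam := by
  rw [← hT.isFinitelySemisimple.maxGenEigenspace_eq_eigenspace, mem_maxGenEigenspace]
  refine ⟨μ, ?_⟩
  rw [map_mul, map_pow, map_sub, aeval_X, aeval_C, Algebra.algebraMap_eq_smul_one] at hq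
  rw [← Module.End.mul_apply, hq, LinearMap.zero_apply]

theorem aeval_apply_eq_zero_of_mem_orthogonal_eigenspace (hT : T.IsSymmetric)
    {lam : 𝕜} {μ : ℕ} {q : 𝕜[X]} (hq : aeval T ((X - C lam) ^ μ * q) = 0)
    {x : E} (hx : x ∈ (eigenspace T lam)ᗮ) : aeval T q x = 0 :=
  Submodule.disjoint_def.mp (eigenspace T lam).orthogonal_disjoint _
    (hT.aeval_apply_mem_eigenspace_of_aeval_X_sub_C_pow_mul_eq_zero hq x)
    (hT.aeval_apply_mem_orthogonal_eigenspace q hx)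

end LinearMap.IsSymmetric

theorem quotient_aeval_eq_orthogonalProjection_general
    {V : Type*} [NormedAddCommGroup V] [InnerProductSpace ℂ V] [FiniteDimensional ℂ V]
    (T : V →ₗ[ℂ] V) (hT : T.IsSymmetric) (lam : ℂ)
    (μ : ℕ) (Q : Polynomial ℂ) (hQ : Q.eval lam ≠ 0)
    (hP : LinearMap.charpoly T = (Polynomial.X - Polynomial.C lam) ^ μ * Q) :
    ∀ v : V, (Q.eval lam)⁻¹ • (Polynomial.aeval T Q) v
      = (Submodule.orthogonalProjection (Module.End.eigenspace T lam) v : V) := by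
  intro v
  set a : eigenspace T lam := Submodule.orthogonalProjectionOnto (eigenspace T lam) v
  have hann : aeval T ((X - C lam) ^ μ * Q) = 0 := hP ▸ LinearMap.aeval_self_charpoly T
  have ha : aeval T Q a = Q.eval lam • (a : V) :=
    aeval_apply_of_mem_apply_eq_smul (mem_eigenspace_iff.mp a.2)
  have hb : aeval T Q (v - a) = 0 :=
    hT.aeval_apply_eq_zero_of_mem_orthogonal_eigenspace hann
      (Submodule.sub_starProjection_mem_orthogonal v)
  calc (Q.eval lam)⁻¹ • aeval T Q v
      = (Q.eval lam)⁻¹ • (aeval T Q a + aeval T Q (v - a)) := by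
        rw [← map_add, add_sub_cancel]
    _ = a := by rw [ha, hb, add_zero, inv_smul_smul₀ hQ]

/-- Let `V` be a finite-dimensional complex inner product space and
`T : V → V` a self-adjoint linear endomorphism with eigenvalue `λ`.  Write the
characteristic polynomial of `T` as `P(X) = (X - λ)^μ * Q(X)` with `Q(λ) ≠ 0`.
Then `Q(T)/Q(λ)` is the orthogonal projection of `V` onto the eigenspace `ker (T - λ)`. -/
theorem quotient_aeval_eq_orthogonalProjection
    {V : Type*} [NormedAddCommGroup V] [InnerProductSpace ℂ V] [FiniteDimensional ℂ V]
    (T : V →ₗ[ℂ] V) (hT : T.IsSymmetric) (lam : ℂ)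
    (hlam : Module.End.HasEigenvalue T lam)
    (μ : ℕ) (Q : Polynomial ℂ) (hQ : Q.eval lam ≠ 0)
    (hP : LinearMap.charpoly T = (Polynomial.X - Polynomial.C lam) ^ μ * Q) :
    ∀ v : V, (Q.eval lam)⁻¹ • (Polynomial.aeval T Q) v
      = (Submodule.orthogonalProjection (Module.End.eigenspace T lam) v : V) :=
  quotient_aeval_eq_orthogonalProjection_general T hT lam μ Q hQ hP
end

section
/- Let a, b, c, d be integers with gcd(a,b) = 1 and gcd(c,d) = 1, and suppose b³c² + A₁acb²d + A₃cb³d = a³d² + A₂a²bd² + A₄ab²d² + A₆b³d² for integers A₁, A₂, A₃, A₄, A₆. Then b divides d. -/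
/-- Let `a, b, c, d` be integers with `gcd(a,b) = 1` and `gcd(c,d) = 1`,
and suppose `b³c² + A₁acb²d + A₃cb³d = a³d² + A₂a²bd² + A₄ab²d² + A₆b³d²` for integers
`A₁, A₂, A₃, A₄, A₆`.  Then `b` divides `d`. -/
theorem b_dvd_d_of_weierstrass_relation
    (a b c d A1 A2 A3 A4 A6 : ℤ) (hab : IsCoprime a b) (hcd : IsCoprime c d)
    (h : b ^ 3 * c ^ 2 + A1 * a * c * b ^ 2 * d + A3 * c * b ^ 3 * d
        = a ^ 3 * d ^ 2 + A2 * a ^ 2 * b * d ^ 2 + A4 * a * b ^ 2 * d ^ 2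
          + A6 * b ^ 3 * d ^ 2) :
    b ∣ d := by
  have hba : IsCoprime b (a ^ 3) := (hab.symm.pow_right)
  have h1 : b ∣ a ^ 3 * d ^ 2 := by
    refine ⟨b ^ 2 * c ^ 2 + A1 * a * c * b * d + A3 * c * b ^ 2 * d - A2 * a ^ 2 * d ^ 2
      - A4 * a * b * d ^ 2 - A6 * b ^ 2 * d ^ 2, ?_⟩
    linarith [h]
  have hd2 : b ∣ d ^ 2 := hba.dvd_of_dvd_mul_left h1
  obtain ⟨e, he⟩ := hd2
  have h2 : b ^ 2 ∣ a ^ 3 * d ^ 2 := by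
    refine ⟨b * c ^ 2 + A1 * a * c * d + A3 * c * b * d - A2 * a ^ 2 * e
      - A4 * a * d ^ 2 - A6 * b * d ^ 2, ?_⟩
    have : A2 * a ^ 2 * b * d ^ 2 = b ^ 2 * (A2 * a ^ 2 * e) := by rw [he]; ring
    linarith [h, this]
  have hd2' : b ^ 2 ∣ d ^ 2 := ((hab.symm.pow (m := 2) (n := 3))).dvd_of_dvd_mul_left h2
  exact (Int.pow_dvd_pow_iff (two_ne_zero)).mp hd2'
end

section
/- Let a, b, c, d' be integers with gcd(a,b) = 1, and suppose d = b·d' where (a/b, c/d) is a rational point in lowest terms on an integral Weierstrass curve, so that b³c² + A₁acb²·bd' + A₃cb³·bd' = a³b²d'² + A₂a²b·b²d'² + A₄ab²·b²d'² + A₆b³·b²d'² holds. Then d' divides b. -/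
/-!
Dividing the relation by `b²` leaves `b c² ≡ 0 (mod d')`, since every other term carries a
factor `d'`. As `c` is prime to `d = b d'`, it is prime to `d'`, so `d' ∣ b`.
-/

theorem dvd_mul_sq_of_weierstrass_relation {R : Type*} [CommRing R] [IsDomain R]
    (a b c d' A1 A2 A3 A4 A6 : R)
    (h : b ^ 3 * c ^ 2 + A1 * a * c * b ^ 2 * (b * d') + A3 * c * b ^ 3 * (b * d')
        = a ^ 3 * (b ^ 2 * d' ^ 2) + A2 * a ^ 2 * b * (b ^ 2 * d' ^ 2)
          + A4 * a * b ^ 2 * (b ^ 2 * d' ^ 2) + A6 * b ^ 3 * (b ^ 2 * d' ^ 2)) :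
    d' ∣ b * c ^ 2 := by
  rcases eq_or_ne b 0 with rfl | hb
  · simp
  refine ⟨d' * (a ^ 3 + A2 * a ^ 2 * b + A4 * a * b ^ 2 + A6 * b ^ 3)
      - A1 * a * c * b - A3 * c * b ^ 2, mul_left_cancel₀ (pow_ne_zero 2 hb) ?_⟩
  linear_combination h

theorem d'_dvd_b_of_weierstrass_relation_general
    (a b c d' A1 A2 A3 A4 A6 : ℤ) (hcd : IsCoprime c (b * d'))
    (h : b ^ 3 * c ^ 2 + A1 * a * c * b ^ 2 * (b * d') + A3 * c * b ^ 3 * (b * d')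
        = a ^ 3 * (b ^ 2 * d' ^ 2) + A2 * a ^ 2 * b * (b ^ 2 * d' ^ 2)
          + A4 * a * b ^ 2 * (b ^ 2 * d' ^ 2) + A6 * b ^ 3 * (b ^ 2 * d' ^ 2)) :
    d' ∣ b := by
  have hcop : IsCoprime d' (c ^ 2) := hcd.of_mul_right_right.symm.pow_right
  exact hcop.dvd_of_dvd_mul_right (dvd_mul_sq_of_weierstrass_relation a b c d' A1 A2 A3 A4 A6 h)

/-- Let `a, b, c, d'` be integers with `gcd(a,b) = 1`, and suppose
`d = b·d'` where `(a/b, c/d)` is a rational point in lowest terms on an integral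
Weierstrass curve, so that
`b³c² + A₁acb²·bd' + A₃cb³·bd' = a³b²d'² + A₂a²b·b²d'² + A₄ab²·b²d'² + A₆b³·b²d'²`
holds.  Then `d'` divides `b`. -/
theorem d'_dvd_b_of_weierstrass_relation
    (a b c d' A1 A2 A3 A4 A6 : ℤ) (hab : IsCoprime a b) (hcd : IsCoprime c (b * d'))
    (h : b ^ 3 * c ^ 2 + A1 * a * c * b ^ 2 * (b * d') + A3 * c * b ^ 3 * (b * d')
        = a ^ 3 * (b ^ 2 * d' ^ 2) + A2 * a ^ 2 * b * (b ^ 2 * d' ^ 2)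
          + A4 * a * b ^ 2 * (b ^ 2 * d' ^ 2) + A6 * b ^ 3 * (b ^ 2 * d' ^ 2)) :
    d' ∣ b :=
  d'_dvd_b_of_weierstrass_relation_general a b c d' A1 A2 A3 A4 A6 hcd h
end
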